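/- arXiv:math/0102223 — 2 statements merged into one kernel-verified Lean document; each statement's English description precedes it below -/
import Mathlib

section
/- For all positive integers n, k and every partition α with at most k parts each at most n, the multiset of hook lengths of the skew diagram SQ equals the disjoint union of the multiset of hook lengths of the rectangle R and the multiset of hook lengths of the Young diagram D; that is, H(SQ) = H(R) ⊎ H(D) as multisets. -/
/-- The skew diagram with rows `a,…,b`, where row `i` contains the cells
`(i,j)` for `lo i ≤ j ≤ hi i`. -/
def skewD (a b : ℕ) (lo hi : ℕ → ℕ) : Finset (ℕ × ℕ) :=
  (Finset.Icc a b).biUnion fun i => (Finset.Icc (lo i) (hi i)).image fun j => (i, j)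

/-- Arm length: number of cells of `G` in the same row, strictly to the right. -/
def arm (G : Finset (ℕ × ℕ)) (x : ℕ × ℕ) : ℕ :=
  (G.filter fun y => y.1 = x.1 ∧ x.2 < y.2).card

/-- Leg length: number of cells of `G` in the same column, strictly below
(rows are numbered bottom to top). -/
def leg (G : Finset (ℕ × ℕ)) (x : ℕ × ℕ) : ℕ :=
  (G.filter fun y => y.2 = x.2 ∧ y.1 < x.1).card

/-- Multiset of arm–leg pairs of the cells of `E`, computed in `G`. -/
def AL (G E : Finset (ℕ × ℕ)) : Multiset (ℕ × ℕ) :=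
  E.val.map fun x => (arm G x, leg G x)

/-- Multiset of hook lengths of `G`. -/
def hookMS (G : Finset (ℕ × ℕ)) : Multiset ℕ :=
  G.val.map fun x => arm G x + leg G x + 1

/-- The skew diagram `T`. -/
def TT (n k : ℕ) (α : ℕ → ℕ) : Finset (ℕ × ℕ) :=
  skewD 1 k (fun i => α 1 - α i + 1) (fun i => n + α 1 - α i)

/-- The skew diagram `V`. -/
def VV (n k : ℕ) (α : ℕ → ℕ) : Finset (ℕ × ℕ) :=
  skewD (k + 1) (2 * k) (fun i => n + α 1 - α (i - k) + 1) (fun _ => n + α 1)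

/-- The skew diagram `SQ = T ∪ V`. -/
def SQ (n k : ℕ) (α : ℕ → ℕ) : Finset (ℕ × ℕ) :=
  TT n k α ∪ VV n k α

/-- The `k × n` rectangle `R`. -/
def RR (n k : ℕ) : Finset (ℕ × ℕ) :=
  skewD 1 k (fun _ => 1) (fun _ => n)

/-- The Young diagram `D` of `α`. -/
def DD (k : ℕ) (α : ℕ → ℕ) : Finset (ℕ × ℕ) :=
  skewD 1 k (fun _ => 1) (fun i => α (k + 1 - i))

/-- The 180° rotation `T*` of `T`. -/
def Tstar (n k : ℕ) (α : ℕ → ℕ) : Finset (ℕ × ℕ) :=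
  skewD 1 k (fun i => α (k + 1 - i) - α k + 1) (fun i => n + α (k + 1 - i) - α k)

/-!
In a row of a skew diagram the arms are `0, 1, 2, …` from right to left, so each hook multiset
is a sum over rows and arms `m` of `m + 1 + leg`. In row `i` of `T` the leg at arm `m` is
`#{p < i | α p ≤ α i + m}`, the in-degree of `i` for the relation `p < q ∧ α p ≤ α q + m`; since
`α` is antitone, for fixed `m` the in-degrees have the same multiset as the out-degrees
`#{q > r | α r ≤ α q + m}`. For `m < α r`, `m + 1 +` the out-degree of `r` is the hook at arm `m`
in the `r`-th row of `D` from the top; for `m ≥ α r` it is `m + k + 1 - r`. In `V`, the rows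
`k + r` with `m < α r` are those with `r ≤ h` for some `h`, and their hooks at arm `m` are
`m + k - h + 1, …, m + k`, i.e. again the values `m + k + 1 - r`. So the hooks of `T` not matched
with `D`, together with those of `V`, are the `m + k + 1 - r` for `m < n`, `1 ≤ r ≤ k`: the
hooks of `R`.
-/

open Finset

namespace Multiset

theorem count_add_countP_succ_le (s : Multiset ℕ) (t : ℕ) :
    count t s + countP (t + 1 ≤ ·) s = countP (t ≤ ·) s := by
  induction s using Multiset.induction_on with
  | empty => simp
  | cons a s ih =>
    rw [count_cons, countP_cons, countP_cons]
    split_ifs <;> omega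

theorem eq_of_forall_countP_le_eq {s u : Multiset ℕ}
    (h : ∀ t, countP (t ≤ ·) s = countP (t ≤ ·) u) : s = u := by
  ext t
  have hs := count_add_countP_succ_le s t
  have hu := count_add_countP_succ_le u t
  rw [h t, h (t + 1)] at hs
  omega

end Multiset

namespace Finset

variable {M : Type*} [AddCommMonoid M]

theorem sum_Icc_one_reflect (k : ℕ) (f : ℕ → M) :
    ∑ i ∈ Icc 1 k, f (k + 1 - i) = ∑ i ∈ Icc 1 k, f i := by
  apply sum_nbij' (k + 1 - ·) (k + 1 - ·) <;> intro i hi <;> simp_all <;> omega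

theorem sum_Icc_eq_sum_range_sub (a b : ℕ) (f : ℕ → M) :
    ∑ j ∈ Icc a b, f j = ∑ m ∈ range (b + 1 - a), f (b - m) := by
  apply sum_nbij' (b - ·) (b - ·) <;> intro i hi <;> simp only [mem_Icc, mem_range] at hi
  · exact mem_range.2 (by omega)
  · exact mem_Icc.2 ⟨by omega, by omega⟩
  · omega
  · omega
  · rw [Nat.sub_sub_self hi.2]

theorem sum_singleton_eq_map {ι β : Type*} (s : Finset ι) (f : ι → β) :
    ∑ i ∈ s, ({f i} : Multiset β) = s.val.map f := by
  rw [sum_eq_multiset_sum, ← Multiset.sum_map_singleton (s.val.map f), Multiset.map_map]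
  rfl

theorem add_one_le_card_filter_Icc_iff_of_monotoneOn {Q : ℕ → Prop} [DecidablePred Q]
    {a b : ℕ} (hQ : MonotoneOn Q (Set.Icc a b)) (t : ℕ) :
    t + 1 ≤ #{x ∈ Icc a b | Q x} ↔ a + t ≤ b ∧ Q (b - t) := by
  constructor
  · intro h
    by_contra hc
    have hsub : {x ∈ Icc a b | Q x} ⊆ Icc (b + 1 - t) b := by
      intro x hx
      rw [mem_filter, mem_Icc] at hx
      rw [mem_Icc]
      refine ⟨?_, hx.1.2⟩
      by_contra hlt
      exact hc ⟨by omega, hQ ⟨hx.1.1, hx.1.2⟩ ⟨by omega, by omega⟩ (by omega) hx.2⟩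
    have := card_le_card hsub
    rw [Nat.card_Icc] at this
    omega
  · rintro ⟨hab, hq⟩
    have hsub : Icc (b - t) b ⊆ {x ∈ Icc a b | Q x} := by
      intro x hx
      rw [mem_Icc] at hx
      rw [mem_filter, mem_Icc]
      exact ⟨⟨by omega, hx.2⟩, hQ ⟨by omega, by omega⟩ ⟨by omega, hx.2⟩ hx.1 hq⟩
    have := card_le_card hsub
    rw [Nat.card_Icc] at this
    omega

theorem add_one_le_card_filter_Icc_iff_of_antitoneOn {Q : ℕ → Prop} [DecidablePred Q]
    {a b : ℕ} (hQ : AntitoneOn Q (Set.Icc a b)) (t : ℕ) :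
    t + 1 ≤ #{x ∈ Icc a b | Q x} ↔ a + t ≤ b ∧ Q (a + t) := by
  constructor
  · intro h
    by_contra hc
    have hsub : {x ∈ Icc a b | Q x} ⊆ Ico a (a + t) := by
      intro x hx
      rw [mem_filter, mem_Icc] at hx
      rw [mem_Ico]
      refine ⟨hx.1.1, ?_⟩
      by_contra hlt
      exact hc ⟨by omega, hQ ⟨by omega, by omega⟩ ⟨hx.1.1, hx.1.2⟩ (by omega) hx.2⟩
    have := card_le_card hsub
    rw [Nat.card_Ico] at this
    omega
  · rintro ⟨hab, hq⟩
    have hsub : Icc a (a + t) ⊆ {x ∈ Icc a b | Q x} := by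
      intro x hx
      rw [mem_Icc] at hx
      rw [mem_filter, mem_Icc]
      exact ⟨⟨hx.1, by omega⟩, hQ ⟨hx.1, by omega⟩ ⟨by omega, hab⟩ hx.2 hq⟩
    have := card_le_card hsub
    rw [Nat.card_Icc] at this
    omega

end Finset

def hook (G : Finset (ℕ × ℕ)) (x : ℕ × ℕ) : ℕ :=
  arm G x + leg G x + 1

theorem hookMS_eq_sum (G : Finset (ℕ × ℕ)) : hookMS G = ∑ x ∈ G, {hook G x} :=
  (sum_singleton_eq_map G (hook G)).symm

theorem mem_skewD {a b : ℕ} {lo hi : ℕ → ℕ} {x : ℕ × ℕ} :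
    x ∈ skewD a b lo hi ↔ a ≤ x.1 ∧ x.1 ≤ b ∧ lo x.1 ≤ x.2 ∧ x.2 ≤ hi x.1 := by
  obtain ⟨i, j⟩ := x
  simp only [skewD, mem_biUnion, mem_image, mem_Icc, Prod.mk.injEq]
  constructor
  · rintro ⟨i, hi, j, hj, rfl, rfl⟩
    exact ⟨hi.1, hi.2, hj⟩
  · rintro ⟨h₁, h₂, hj⟩
    exact ⟨i, ⟨h₁, h₂⟩, j, hj, rfl, rfl⟩

theorem sum_skewD {M : Type*} [AddCommMonoid M] (a b : ℕ) (lo hi : ℕ → ℕ) (f : ℕ × ℕ → M) :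
    ∑ x ∈ skewD a b lo hi, f x
      = ∑ i ∈ Icc a b, ∑ m ∈ range (hi i + 1 - lo i), f (i, hi i - m) := by
  rw [skewD, sum_biUnion]
  · refine sum_congr rfl fun i _ => ?_
    rw [sum_image fun j _ j' _ h => (Prod.mk.inj h).2, sum_Icc_eq_sum_range_sub]
  · intro i _ i' _ hii'
    rw [Function.onFun, disjoint_left]
    intro x hx hx'
    obtain ⟨j, -, rfl⟩ := mem_image.1 hx
    obtain ⟨j', -, h⟩ := mem_image.1 hx'
    exact hii' (congrArg Prod.fst h).symm

theorem arm_skewD {a b i j : ℕ} {lo hi : ℕ → ℕ} (hai : a ≤ i) (hib : i ≤ b) (hj : lo i ≤ j + 1) :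
    arm (skewD a b lo hi) (i, j) = hi i - j := by
  rw [arm, ← Nat.card_Ioc]
  apply card_nbij' Prod.snd (i, ·)
  · rintro ⟨i', j'⟩ hy
    simp only [coe_filter, Set.mem_ofPred_eq, mem_skewD] at hy
    obtain ⟨⟨-, -, -, hj'⟩, rfl, hjj'⟩ := hy
    simpa using ⟨hjj', hj'⟩
  · intro j' hj'
    simp only [coe_Ioc, Set.mem_Ioc] at hj'
    simpa [mem_skewD] using ⟨⟨hai, hib, by omega, hj'.2⟩, hj'.1⟩
  · rintro ⟨i', j'⟩ hy
    simp only [coe_filter, Set.mem_ofPred_eq] at hy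
    rw [hy.2.1]
  · intro _ _
    rfl

theorem leg_skewD (a b : ℕ) (lo hi : ℕ → ℕ) (i j : ℕ) :
    leg (skewD a b lo hi) (i, j) = #{p ∈ Icc a b | p < i ∧ lo p ≤ j ∧ j ≤ hi p} := by
  apply card_nbij' Prod.fst (·, j)
  · rintro ⟨i', j'⟩ hy
    simp only [coe_filter, Set.mem_ofPred_eq, mem_skewD] at hy
    obtain ⟨⟨hi', hib', hlo, hhi⟩, rfl, hii'⟩ := hy
    simpa using ⟨⟨hi', hib'⟩, hii', hlo, hhi⟩
  · intro p hp
    simp only [coe_filter, Set.mem_ofPred_eq, mem_Icc] at hp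
    simpa [mem_skewD] using ⟨⟨hp.1.1, hp.1.2, hp.2.2⟩, hp.2.1⟩
  · rintro ⟨i', j'⟩ hy
    simp only [coe_filter, Set.mem_ofPred_eq] at hy
    rw [hy.2.1]
  · intro _ _
    rfl

theorem hook_skewD {a b i j : ℕ} {lo hi : ℕ → ℕ} (hai : a ≤ i) (hib : i ≤ b) (hj : lo i ≤ j) :
    hook (skewD a b lo hi) (i, j)
      = hi i - j + 1 + #{p ∈ Icc a b | p < i ∧ lo p ≤ j ∧ j ≤ hi p} := by
  rw [hook, arm_skewD hai hib (by omega), leg_skewD]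
  ring

theorem arm_union {G H : Finset (ℕ × ℕ)} (h : Disjoint G H) (x : ℕ × ℕ) :
    arm (G ∪ H) x = arm G x + arm H x := by
  rw [arm, arm, arm, filter_union, card_union_of_disjoint (disjoint_filter_filter h)]

theorem leg_union {G H : Finset (ℕ × ℕ)} (h : Disjoint G H) (x : ℕ × ℕ) :
    leg (G ∪ H) x = leg G x + leg H x := by
  rw [leg, leg, leg, filter_union, card_union_of_disjoint (disjoint_filter_filter h)]

theorem hookMS_RR (n k : ℕ) : hookMS (RR n k) = ∑ i ∈ Icc 1 k, ∑ m ∈ range n, {m + i} := by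
  rw [hookMS_eq_sum, RR, sum_skewD, Nat.add_sub_cancel]
  refine sum_congr rfl fun i hi => sum_congr rfl fun m hm => ?_
  rw [mem_Icc] at hi
  rw [mem_range] at hm
  have hlower : {p ∈ Icc 1 k | p < i ∧ 1 ≤ n - m ∧ n - m ≤ n} = Icc 1 (i - 1) := by
    ext p
    simp only [mem_filter, mem_Icc]
    omega
  rw [hook_skewD hi.1 hi.2 (by omega), hlower, Nat.card_Icc]
  congr 1
  omega

theorem hookMS_DD (k : ℕ) (α : ℕ → ℕ) :
    hookMS (DD k α)
      = ∑ r ∈ Icc 1 k, ∑ m ∈ range (α r), {m + 1 + #{q ∈ Icc (r + 1) k | α r ≤ α q + m}} := by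
  rw [hookMS_eq_sum, DD, sum_skewD, ← sum_Icc_one_reflect]
  refine sum_congr rfl fun r hr => ?_
  rw [mem_Icc] at hr
  have hrr : k + 1 - (k + 1 - r) = r := by omega
  rw [Nat.add_sub_cancel, hrr]
  refine sum_congr rfl fun m hm => ?_
  rw [mem_range] at hm
  rw [hook_skewD (by omega) (by omega) (by omega), hrr]
  congr 1
  rw [Nat.sub_sub_self hm.le, add_right_inj]
  apply card_nbij' (k + 1 - ·) (k + 1 - ·)
  all_goals intro p hp
  all_goals simp only [coe_filter, Set.mem_ofPred_eq, mem_Icc] at hp ⊢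
  · omega
  · rw [Nat.sub_sub_self (by omega : p ≤ k + 1)]
    omega
  · omega
  · omega

section SQ

variable {n k : ℕ} {α : ℕ → ℕ}

theorem apply_le_apply_one_of_antitoneOn (hα : AntitoneOn α (Set.Icc 1 k)) {i : ℕ}
    (hi : i ∈ Icc 1 k) : α i ≤ α 1 := by
  rw [mem_Icc] at hi
  exact hα ⟨le_rfl, hi.1.trans hi.2⟩ hi hi.1

theorem disjoint_TT_VV : Disjoint (TT n k α) (VV n k α) := by
  rw [disjoint_left]
  intro x hx hx'
  rw [TT, mem_skewD] at hx
  rw [VV, mem_skewD] at hx'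
  omega

theorem hook_SQ_of_TT (hα : AntitoneOn α (Set.Icc 1 k)) {i m : ℕ} (hi : i ∈ Icc 1 k)
    (hm : m < n) :
    hook (SQ n k α) (i, n + α 1 - α i - m) = m + 1 + #{p ∈ Icc 1 (i - 1) | α p ≤ α i + m} := by
  have hαi := apply_le_apply_one_of_antitoneOn hα hi
  rw [mem_Icc] at hi
  have harmT : arm (TT n k α) (i, n + α 1 - α i - m) = m := by
    rw [TT, arm_skewD hi.1 hi.2 (by omega)]
    omega
  have harmV : arm (VV n k α) (i, n + α 1 - α i - m) = 0 :=
    card_eq_zero.2 <| filter_eq_empty_iff.2 fun y hy hrow => by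
      rw [VV, mem_skewD] at hy
      omega
  have hlegT : leg (TT n k α) (i, n + α 1 - α i - m) = #{p ∈ Icc 1 (i - 1) | α p ≤ α i + m} := by
    rw [TT, leg_skewD]
    congr 1
    ext p
    simp only [mem_filter, mem_Icc]
    by_cases hp : 1 ≤ p ∧ p < i
    · have hαip : α i ≤ α p := hα ⟨hp.1, by omega⟩ ⟨hi.1, hi.2⟩ hp.2.le
      have hαp := apply_le_apply_one_of_antitoneOn hα (mem_Icc.2 ⟨hp.1, by omega⟩)
      omega
    · omega
  have hlegV : leg (VV n k α) (i, n + α 1 - α i - m) = 0 :=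
    card_eq_zero.2 <| filter_eq_empty_iff.2 fun y hy hcol => by
      rw [VV, mem_skewD] at hy
      omega
  rw [hook, SQ, arm_union disjoint_TT_VV, leg_union disjoint_TT_VV, harmT, harmV, hlegT, hlegV]
  ring

theorem hook_SQ_of_VV (hα1 : α 1 ≤ n) (hα : AntitoneOn α (Set.Icc 1 k)) {r m : ℕ}
    (hr : r ∈ Icc 1 k) (hm : m < α r) :
    hook (SQ n k α) (k + r, n + α 1 - m) = m + r + #{p ∈ Icc 1 k | α p ≤ m} := by
  have hαr := apply_le_apply_one_of_antitoneOn hα hr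
  rw [mem_Icc] at hr
  have harmT : arm (TT n k α) (k + r, n + α 1 - m) = 0 :=
    card_eq_zero.2 <| filter_eq_empty_iff.2 fun y hy hrow => by
      rw [TT, mem_skewD] at hy
      omega
  have harmV : arm (VV n k α) (k + r, n + α 1 - m) = m := by
    rw [VV, arm_skewD (by omega) (by omega) (by rw [Nat.add_sub_cancel_left]; omega)]
    omega
  have hlegT : leg (TT n k α) (k + r, n + α 1 - m) = #{p ∈ Icc 1 k | α p ≤ m} := by
    rw [TT, leg_skewD]
    refine congrArg card (filter_congr fun p hp => ?_)
    have hαp := apply_le_apply_one_of_antitoneOn hα hp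
    rw [mem_Icc] at hp
    omega
  have hlegV : leg (VV n k α) (k + r, n + α 1 - m) = r - 1 := by
    have hbelow : {p ∈ Icc (k + 1) (2 * k) | p < k + r ∧ n + α 1 - α (p - k) + 1 ≤ n + α 1 - m ∧
        n + α 1 - m ≤ n + α 1} = Icc (k + 1) (k + r - 1) := by
      ext p
      simp only [mem_filter, mem_Icc]
      by_cases hp : k + 1 ≤ p ∧ p < k + r
      · have hαpr : α r ≤ α (p - k) := hα ⟨by omega, by omega⟩ ⟨hr.1, hr.2⟩ (by omega)
        omega
      · omega
    rw [VV, leg_skewD, hbelow, Nat.card_Icc]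
    omega
  rw [hook, SQ, arm_union disjoint_TT_VV, leg_union disjoint_TT_VV, harmT, harmV, hlegT, hlegV]
  omega

theorem hookMS_SQ (hα1 : α 1 ≤ n) (hα : AntitoneOn α (Set.Icc 1 k)) :
    hookMS (SQ n k α)
      = ∑ i ∈ Icc 1 k, ∑ m ∈ range n, {m + 1 + #{p ∈ Icc 1 (i - 1) | α p ≤ α i + m}}
        + ∑ r ∈ Icc 1 k, ∑ m ∈ range (α r), {m + r + #{p ∈ Icc 1 k | α p ≤ m}} := by
  rw [hookMS_eq_sum]
  -- unfold `SQ` in the index set only, not inside `hook (SQ n k α)`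
  nth_rw 1 [SQ]
  rw [sum_union disjoint_TT_VV, TT, VV, sum_skewD, sum_skewD]
  congr 1
  · refine sum_congr rfl fun i hi => ?_
    have hαi := apply_le_apply_one_of_antitoneOn hα hi
    rw [show n + α 1 - α i + 1 - (α 1 - α i + 1) = n by omega]
    exact sum_congr rfl fun m hm => by rw [hook_SQ_of_TT hα hi (mem_range.1 hm)]
  · rw [show Icc (k + 1) (2 * k) = (Icc 1 k).map (addLeftEmbedding k) by
      rw [map_add_left_Icc, two_mul], sum_map]
    refine sum_congr rfl fun r hr => ?_
    have hαr := apply_le_apply_one_of_antitoneOn hα hr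
    rw [addLeftEmbedding_apply, Nat.add_sub_cancel_left,
      show n + α 1 + 1 - (n + α 1 - α r + 1) = α r by omega]
    exact sum_congr rfl fun m hm => by rw [hook_SQ_of_VV hα1 hα hr (mem_range.1 hm)]

end SQ

section Counting

variable {n k : ℕ} {α : ℕ → ℕ}

/-- Both sides have exactly `#{r | α r ≤ α (r + t + 1) + m}` entries `≥ t + 1`: as `α` is
antitone, the sets counted are intervals ending at `i - 1`, resp. starting at `r + 1`. -/
theorem map_card_lower_eq_map_card_upper (hα : AntitoneOn α (Set.Icc 1 k)) (m : ℕ) :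
    (Icc 1 k).val.map (fun i => #{p ∈ Icc 1 (i - 1) | α p ≤ α i + m})
      = (Icc 1 k).val.map (fun r => #{q ∈ Icc (r + 1) k | α r ≤ α q + m}) := by
  refine Multiset.eq_of_forall_countP_le_eq fun t => ?_
  rw [Multiset.countP_map, Multiset.countP_map, ← filter_val, ← filter_val, ← card_def,
    ← card_def]
  rcases t with _ | t
  · simp
  have hlower : ∀ i ∈ Icc 1 k, t + 1 ≤ #{p ∈ Icc 1 (i - 1) | α p ≤ α i + m}
      ↔ 1 + t ≤ i - 1 ∧ α (i - 1 - t) ≤ α i + m := fun i hi =>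
    add_one_le_card_filter_Icc_iff_of_monotoneOn (fun x hx y hy hxy hq =>
      (hα ⟨hx.1, by grind⟩ ⟨hy.1, by grind⟩ hxy).trans hq) t
  have hupper : ∀ r ∈ Icc 1 k, t + 1 ≤ #{q ∈ Icc (r + 1) k | α r ≤ α q + m}
      ↔ r + 1 + t ≤ k ∧ α r ≤ α (r + 1 + t) + m := fun r hr =>
    add_one_le_card_filter_Icc_iff_of_antitoneOn (fun x hx y hy hxy hq =>
      hq.trans (by grw [hα ⟨by grind, hx.2⟩ ⟨by grind, hy.2⟩ hxy])) t
  rw [filter_congr hlower, filter_congr hupper]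
  apply card_nbij' (· - (t + 1)) (· + (t + 1))
  all_goals intro i hi
  all_goals simp only [coe_filter, Set.mem_ofPred_eq, mem_Icc] at hi ⊢
  · rw [show i - (t + 1) + 1 + t = i by omega, show i - (t + 1) = i - 1 - t by omega]
    omega
  · rw [show i + (t + 1) - 1 - t = i by omega, show i + (t + 1) = i + 1 + t by omega]
    omega
  · omega
  · omega

theorem sum_rows_T (hαn : ∀ r ∈ Icc 1 k, α r ≤ n) (hα : AntitoneOn α (Set.Icc 1 k)) :
    ∑ i ∈ Icc 1 k, ∑ m ∈ range n, ({m + 1 + #{p ∈ Icc 1 (i - 1) | α p ≤ α i + m}} : Multiset ℕ)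
      = ∑ r ∈ Icc 1 k, ∑ m ∈ range (α r), {m + 1 + #{q ∈ Icc (r + 1) k | α r ≤ α q + m}}
        + ∑ r ∈ Icc 1 k, ∑ m ∈ Ico (α r) n, {m + (k + 1 - r)} := by
  have hdegrees : ∀ m, ∑ i ∈ Icc 1 k, ({m + 1 + #{p ∈ Icc 1 (i - 1) | α p ≤ α i + m}} : Multiset ℕ)
      = ∑ r ∈ Icc 1 k, {m + 1 + #{q ∈ Icc (r + 1) k | α r ≤ α q + m}} := fun m => by
    simpa only [sum_singleton_eq_map, Multiset.map_map, Function.comp_def] using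
      congrArg (Multiset.map (m + 1 + ·)) (map_card_lower_eq_map_card_upper hα m)
  rw [sum_comm, sum_congr rfl fun m _ => hdegrees m, sum_comm, ← sum_add_distrib]
  refine sum_congr rfl fun r hr => ?_
  rw [← sum_range_add_sum_Ico _ (hαn r hr)]
  congr 1
  refine sum_congr rfl fun m hm => ?_
  rw [mem_Icc] at hr
  rw [mem_Ico] at hm
  rw [filter_true_of_mem fun q _ => by omega, Nat.card_Icc]
  congr 1
  omega

theorem sum_rows_V (hα : AntitoneOn α (Set.Icc 1 k)) :
    ∑ r ∈ Icc 1 k, ∑ m ∈ range (α r), ({m + r + #{p ∈ Icc 1 k | α p ≤ m}} : Multiset ℕ)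
      = ∑ r ∈ Icc 1 k, ∑ m ∈ range (α r), {m + (k + 1 - r)} := by
  have hswap : ∀ f : ℕ → ℕ → Multiset ℕ, ∑ r ∈ Icc 1 k, ∑ m ∈ range (α r), f r m
      = ∑ m ∈ range (α 1), ∑ r ∈ Icc 1 k with m < α r, f r m := fun f =>
    sum_comm' fun r m => by
      simp only [mem_Icc, mem_range, mem_filter]
      constructor
      · rintro ⟨hr, hm⟩
        exact ⟨⟨hr, hm⟩, hm.trans_le (apply_le_apply_one_of_antitoneOn hα (mem_Icc.2 hr))⟩
      · rintro ⟨⟨hr, hm⟩, -⟩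
        exact ⟨hr, hm⟩
  rw [hswap, hswap]
  refine sum_congr rfl fun m _ => ?_
  set h := #{r ∈ Icc 1 k | m < α r}
  have hhk : h ≤ k := (card_filter_le _ _).trans (Nat.card_Icc 1 k).le
  have hrows : {r ∈ Icc 1 k | m < α r} = Icc 1 h := by
    ext r
    have := add_one_le_card_filter_Icc_iff_of_antitoneOn (Q := fun r => m < α r)
      (fun x hx y hy hxy hq => hq.trans_le (hα hx hy hxy)) (r - 1)
    rw [mem_filter, mem_Icc, mem_Icc]
    rcases Nat.eq_zero_or_pos r with rfl | hr
    · omega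
    · rw [show 1 + (r - 1) = r by omega] at this
      omega
  have hcols : #{p ∈ Icc 1 k | α p ≤ m} = k - h := by
    have := card_filter_add_card_filter_not (s := Icc 1 k) (fun r => m < α r)
    simp only [not_lt, Nat.card_Icc] at this
    omega
  rw [hrows, hcols, ← sum_Icc_one_reflect]
  refine sum_congr rfl fun r hr => ?_
  rw [mem_Icc] at hr
  congr 1
  omega

end Counting

theorem hook_SQ_eq_R_union_D_general (n k : ℕ) (α : ℕ → ℕ)
    (hα1 : α 1 ≤ n) (hmono : ∀ i j, 1 ≤ i → i ≤ j → j ≤ k → α j ≤ α i) :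
    hookMS (SQ n k α) = hookMS (RR n k) + hookMS (DD k α) := by
  have hα : AntitoneOn α (Set.Icc 1 k) := fun i hi j hj hij => hmono i j hi.1 hij hj.2
  have hαn : ∀ r ∈ Icc 1 k, α r ≤ n := fun r hr =>
    (apply_le_apply_one_of_antitoneOn hα hr).trans hα1
  have hglue : ∑ r ∈ Icc 1 k, ∑ m ∈ Ico (α r) n, ({m + (k + 1 - r)} : Multiset ℕ)
      + ∑ r ∈ Icc 1 k, ∑ m ∈ range (α r), {m + (k + 1 - r)} = hookMS (RR n k) := by
    rw [hookMS_RR, ← sum_Icc_one_reflect k (fun i => ∑ m ∈ range n, ({m + i} : Multiset ℕ)),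
      ← sum_add_distrib]
    exact sum_congr rfl fun r hr => by rw [add_comm, sum_range_add_sum_Ico _ (hαn r hr)]
  rw [hookMS_SQ hα1 hα, sum_rows_T hαn hα, sum_rows_V hα, add_assoc, hglue, hookMS_DD, add_comm]

/-- Regev–Vershik conjecture: the multiset of hook lengths of `SQ` is the
disjoint union of those of `R` and of `D`. -/
theorem hook_SQ_eq_R_union_D (n k : ℕ) (α : ℕ → ℕ) (hn : 0 < n) (hk : 0 < k)
    (hα1 : α 1 ≤ n) (hmono : ∀ i j, 1 ≤ i → i ≤ j → j ≤ k → α j ≤ α i) :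
    hookMS (SQ n k α) = hookMS (RR n k) + hookMS (DD k α) :=
  hook_SQ_eq_R_union_D_general n k α hα1 hmono
end

section
/- Let k ≥ 1, n = k+1, α ∈ 𝓑, and 1 ≤ i ≤ k+1. Suppose some cell of T with arm length i−1 lies strictly above the diagonal of T, and let u be the smallest row index of such a cell. Then u − α_u > i − 1 and (u−1) − α_{u−1} ≤ i − 1 (as integers, with the conventions α₀ = k+1). -/
/-- `α` has Frobenius form `(λ₁,…,λ_m | λ₁−1,…,λ_m−1)` with
`k ≥ λ₁ > ⋯ > λ_m > 0`: equivalently `α_j = λ_j + j` for `1 ≤ j ≤ m`,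
`α_j ≤ m` for `m < j ≤ k`, and the conjugate partition satisfies
`α′_j = λ_j + j − 1` for `1 ≤ j ≤ m`. -/
def FrobB (k : ℕ) (α : ℕ → ℕ) (m : ℕ) (lam : ℕ → ℕ) : Prop :=
  (∀ j, 1 ≤ j → j ≤ m → 0 < lam j ∧ lam j ≤ k) ∧
  (∀ j j', 1 ≤ j → j < j' → j' ≤ m → lam j' < lam j) ∧
  (∀ j, 1 ≤ j → j ≤ m → α j = lam j + j) ∧
  (∀ j, m < j → j ≤ k → α j ≤ m) ∧
  (∀ j, 1 ≤ j → j ≤ m →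
    ((Finset.Icc 1 k).filter fun i => j ≤ α i).card = lam j + j - 1)

/-- `α ∈ 𝓑`. -/
def memB (k : ℕ) (α : ℕ → ℕ) : Prop := ∃ m lam, FrobB k α m lam

lemma mem_TT {k : ℕ} {α : ℕ → ℕ} {a j : ℕ} :
    (a, j) ∈ TT (k + 1) k α ↔
      1 ≤ a ∧ a ≤ k ∧ α 1 - α a + 1 ≤ j ∧ j ≤ k + 1 + α 1 - α a := by
  simp only [TT, skewD, Finset.mem_biUnion, Finset.mem_image, Finset.mem_Icc]
  constructor
  · rintro ⟨b, ⟨hb1, hb2⟩, c, ⟨hc1, hc2⟩, heq⟩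
    injection heq with e1 e2
    subst e1; subst e2
    exact ⟨hb1, hb2, hc1, hc2⟩
  · rintro ⟨h1, h2, h3, h4⟩
    exact ⟨a, ⟨h1, h2⟩, j, ⟨h3, h4⟩, rfl⟩

lemma arm_TT {k : ℕ} {α : ℕ → ℕ} {a j : ℕ} (h1 : 1 ≤ a) (h2 : a ≤ k)
    (h3 : α 1 - α a + 1 ≤ j) :
    arm (TT (k + 1) k α) (a, j) = k + 1 + α 1 - α a - j := by
  have harm : arm (TT (k + 1) k α) (a, j)
      = ((TT (k + 1) k α).filter fun y => y.1 = a ∧ j < y.2).card := rfl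
  have hset : ((TT (k + 1) k α).filter fun y => y.1 = a ∧ j < y.2)
      = (Finset.Icc (j + 1) (k + 1 + α 1 - α a)).image fun c => (a, c) := by
    ext ⟨b, c⟩
    simp only [Finset.mem_filter, Finset.mem_image, Finset.mem_Icc, mem_TT]
    constructor
    · rintro ⟨⟨hb1, hb2, hc1, hc2⟩, rfl, hjc⟩
      exact ⟨c, ⟨by omega, hc2⟩, rfl⟩
    · rintro ⟨c', ⟨hc1, hc2⟩, heq⟩
      injection heq with e1 e2
      subst e1; subst e2
      exact ⟨⟨h1, h2, by omega, hc2⟩, rfl, by omega⟩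
  rw [harm, hset,
    Finset.card_image_of_injective _ (fun x y h => by injection h), Nat.card_Icc]
  omega

/-- If `u` is the smallest row index of a cell of `T` with arm length `i−1`
strictly above the diagonal of `T`, then `u − α_u > i − 1` and
`(u−1) − α_{u−1} ≤ i − 1`, as integers (convention `α₀ = k+1`). -/
theorem techprop_part1 (k : ℕ) (α : ℕ → ℕ) (hk : 0 < k)
    (hα1 : α 1 ≤ k + 1) (hmono : ∀ i j, 1 ≤ i → i ≤ j → j ≤ k → α j ≤ α i)
    (hB : memB k α) (hα0 : α 0 = k + 1)
    (i : ℕ) (hi1 : 1 ≤ i) (hik : i ≤ k + 1) (u : ℕ)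
    (hu : ∃ j, (u, j) ∈ TT (k + 1) k α ∧
      arm (TT (k + 1) k α) (u, j) = i - 1 ∧ k + 1 + α 1 < u + j)
    (hmin : ∀ a j, (a, j) ∈ TT (k + 1) k α →
      arm (TT (k + 1) k α) (a, j) = i - 1 → k + 1 + α 1 < a + j → u ≤ a) :
    (i : ℤ) - 1 < (u : ℤ) - (α u : ℤ) ∧
      (u : ℤ) - 1 - (α (u - 1) : ℤ) ≤ (i : ℤ) - 1 := by
  obtain ⟨j, hmem, harm, hdiag⟩ := hu
  rw [mem_TT] at hmem
  obtain ⟨hu1, huk, hjlo, hjhi⟩ := hmem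
  have hαu : α u ≤ α 1 := hmono 1 u le_rfl hu1 huk
  rw [arm_TT hu1 huk hjlo] at harm
  have first : (i : ℤ) - 1 < (u : ℤ) - (α u : ℤ) := by omega
  refine ⟨first, ?_⟩
  by_contra hcon
  push_neg at hcon
  have hu2 : 2 ≤ u := by
    by_contra h
    have h1 : u = 1 := by omega
    subst h1
    rw [show (1 : ℕ) - 1 = 0 from rfl, hα0] at hcon
    omega
  set a := u - 1 with ha
  have ha1 : 1 ≤ a := by omega
  have hak : a ≤ k := by omega
  have hαa : α a ≤ α 1 := hmono 1 a le_rfl ha1 hak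
  have hcon' : α a + i ≤ a := by omega
  set j' := k + 1 + α 1 - α a - (i - 1) with hj'
  have hjlo' : α 1 - α a + 1 ≤ j' := by omega
  have hmem' : (a, j') ∈ TT (k + 1) k α := mem_TT.mpr ⟨ha1, hak, hjlo', by omega⟩
  have harm' : arm (TT (k + 1) k α) (a, j') = i - 1 := by
    rw [arm_TT ha1 hak hjlo']; omega
  have hdiag' : k + 1 + α 1 < a + j' := by omega
  have := hmin a j' hmem' harm' hdiag'
  omega
end
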